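/- Let x ∈ Q(R) be dominant, fix a simple root α_{i₀}, and suppose z = y + (1/2)α_{i₀} lies in Q(R), where (i) ⟨y, α_{i₀}^∨⟩ = 0, (ii) y is dominant, and (iii) ⟨y, ϖ_i⟩ ≤ ⟨x, ϖ_i⟩ for all i ∈ I. Then z ∈ Conv(O_x). -/

import Mathlib

open Module

/-- An irreducible reduced (crystallographic) root system `R` in a real vector space `V`
(playing the role of `Q(R) ⊗ ℝ`), together with a base of simple roots indexed by `ι`,
the coroot pairings `u ↦ ⟨u, α^∨⟩` realised as linear functionals, and the fundamental
coweights `ϖ_i`, characterised by `⟨ϖ_i, α_j⟩ = δ_{ij}`. -/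
structure RootSystemData (ι : Type*) (V : Type*) [Fintype ι] [DecidableEq ι]
    [AddCommGroup V] [Module ℝ V] where
  /-- the set of roots `R` -/
  isRoot : Set V
  /-- the coroot pairing: `coroot a u = ⟨u, a^∨⟩` -/
  coroot : V → (V →ₗ[ℝ] ℝ)
  /-- the simple roots `α_i` -/
  sroot : ι → V
  sroot_mem : ∀ i, sroot i ∈ isRoot
  coroot_self : ∀ a ∈ isRoot, coroot a a = 2
  crystallographic : ∀ a ∈ isRoot, ∀ b ∈ isRoot, ∃ n : ℤ, coroot a b = (n : ℝ)
  reflect_mem : ∀ a ∈ isRoot, ∀ b ∈ isRoot, b - coroot a b • a ∈ isRoot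
  reduced : ∀ a ∈ isRoot, ∀ t : ℝ, t • a ∈ isRoot → t = 1 ∨ t = -1
  finite : isRoot.Finite
  ne_zero : ∀ a ∈ isRoot, a ≠ 0
  span_top : Submodule.span ℝ isRoot = ⊤
  /-- every root is a nonnegative or nonpositive integral combination of the simple roots -/
  base : ∀ a ∈ isRoot, (∃ c : ι → ℕ, a = ∑ i, (c i : ℝ) • sroot i) ∨
    (∃ c : ι → ℕ, a = -∑ i, (c i : ℝ) • sroot i)
  /-- the root system is irreducible -/
  irreducible : ∀ s t : Set V, isRoot = s ∪ t →
    (∀ a ∈ s, ∀ b ∈ t, coroot a b = 0) → s = ∅ ∨ t = ∅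
  /-- the fundamental coweights `ϖ_i`, as linear functionals `u ↦ ⟨u, ϖ_i⟩` -/
  coweight : ι → (V →ₗ[ℝ] ℝ)
  coweight_sroot : ∀ i j, coweight i (sroot j) = if i = j then 1 else 0

namespace RootSystemData

variable {ι V : Type*} [Fintype ι] [DecidableEq ι] [AddCommGroup V] [Module ℝ V]
variable (P : RootSystemData ι V)

/-- The root lattice `Q(R)`, i.e. the `ℤ`-span of the roots. -/
def rootLattice : AddSubgroup V := AddSubgroup.closure P.isRoot

/-- The Weyl group `W`, generated by the reflections in the roots. -/
def weylGroup : Subgroup (V ≃ₗ[ℝ] V) :=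
  Subgroup.closure { w | ∃ a, ∃ ha : a ∈ P.isRoot, w = Module.reflection (P.coroot_self a ha) }

/-- The Weyl orbit `O_x = {wx : w ∈ W}` of an element `x`. -/
def orbit (x : V) : Set V := { v | ∃ w ∈ P.weylGroup, v = w x }

/-- An element `u` is dominant if `⟨u, α_i^∨⟩ ≥ 0` for all `i ∈ I`. -/
def IsDominant (u : V) : Prop := ∀ i, 0 ≤ P.coroot (P.sroot i) u

/-- The simple reflection `s_{α_i}`. -/
def sref (i : ι) : V ≃ₗ[ℝ] V :=
  Module.reflection (P.coroot_self (P.sroot i) (P.sroot_mem i))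

end RootSystemData

/-!
Write `z = y + ½ α_{i₀}`. For a positive root `γ`, `⟨y, γ^∨⟩ ≥ 0` by dominance and
`⟨α_{i₀}, γ^∨⟩ ≥ -3`, so the integer `⟨z, γ^∨⟩` is at least `-1`; integrality of coordinates also
gives `z ≤ x` coordinatewise. Along a word for `w ∈ W`, each simple reflection `s_j` either lowers
the current element or adds exactly `α_j` to it: by the deletion property the pairing involved is
`⟨z, γ^∨⟩` for a positive root `γ`. Dominance of `x` keeps the coordinates below those of `x`
after such a step, so every `w z` lies below `x`. Finally, a functional separating `z` from
`Conv(W x)` is moved by `W` to one that is nonnegative on the simple roots (maximise it over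
`W ρ`), and such a functional is at least as large at `x` as at any `w z`.
-/

lemma exists_linearMap_lt_of_notMem_convexHull {E : Type*} [AddCommGroup E] [Module ℝ E]
    [FiniteDimensional ℝ E] {S : Set E} (hS : S.Finite) {z : E} (hz : z ∉ convexHull ℝ S) :
    ∃ F : E →ₗ[ℝ] ℝ, ∀ s ∈ S, F s < F z := by
  let e := (Module.finBasis ℝ E).equivFun
  have hz' : e z ∉ convexHull ℝ (e '' S) := by
    rw [← LinearEquiv.coe_toLinearMap, ← LinearMap.image_convexHull]
    rintro ⟨v, hv, hve⟩
    exact hz (e.injective hve ▸ hv)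
  obtain ⟨f, u, hfz, hfS⟩ := geometric_hahn_banach_point_closed (convex_convexHull ℝ _)
    ((hS.image e).isCompact_convexHull (𝕜 := ℝ)).isClosed hz'
  refine ⟨-((f : _ →ₗ[ℝ] ℝ) ∘ₗ e.toLinearMap), fun s hs => ?_⟩
  have := hfS (e s) (subset_convexHull ℝ _ ⟨s, hs, rfl⟩)
  simp only [LinearMap.neg_apply, LinearMap.comp_apply, neg_lt_neg_iff]
  exact hfz.trans this

namespace RootSystemData

open scoped Pointwise

variable {ι V : Type*} [Fintype ι] [DecidableEq ι] [AddCommGroup V] [Module ℝ V]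
variable (P : RootSystemData ι V)

section Coordinates

lemma coweight_sum_smul_sroot (c : ι → ℝ) (j : ι) :
    P.coweight j (∑ i, c i • P.sroot i) = c j := by
  simp [P.coweight_sroot]

lemma span_range_sroot : Submodule.span ℝ (Set.range P.sroot) = ⊤ := by
  rw [eq_top_iff, ← P.span_top, Submodule.span_le]
  intro a ha
  have hmem (c : ι → ℕ) : ∑ i, (c i : ℝ) • P.sroot i ∈ Submodule.span ℝ (Set.range P.sroot) :=
    Submodule.sum_mem _ fun i _ => Submodule.smul_mem _ _ (Submodule.subset_span ⟨i, rfl⟩)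
  rcases P.base a ha with ⟨c, rfl⟩ | ⟨c, rfl⟩
  · exact hmem c
  · exact Submodule.neg_mem _ (hmem c)

lemma sum_coweight_smul_sroot (v : V) : ∑ i, P.coweight i v • P.sroot i = v := by
  have : ∑ i, (P.coweight i).smulRight (P.sroot i) = LinearMap.id :=
    LinearMap.ext_on_range P.span_range_sroot fun j => by simp [P.coweight_sroot]
  simpa using LinearMap.congr_fun this v

lemma apply_eq_sum_coweight_mul (f : V →ₗ[ℝ] ℝ) (v : V) :
    f v = ∑ i, P.coweight i v * f (P.sroot i) := by
  conv_lhs => rw [← P.sum_coweight_smul_sroot v]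
  simp

lemma eq_zero_of_forall_coweight_eq_zero {v : V} (h : ∀ i, P.coweight i v = 0) : v = 0 := by
  simpa [h] using (P.sum_coweight_smul_sroot v).symm

lemma finiteDimensional (P : RootSystemData ι V) : FiniteDimensional ℝ V :=
  ⟨P.span_top ▸ Submodule.fg_span P.finite⟩

end Coordinates

section Positivity

def IsPos (a : V) : Prop := ∀ i, 0 ≤ P.coweight i a

lemma isPos_sroot (i : ι) : P.IsPos (P.sroot i) := fun j => by
  rw [P.coweight_sroot]; split_ifs <;> norm_num

lemma isPos_or_isPos_neg {a : V} (ha : a ∈ P.isRoot) : P.IsPos a ∨ P.IsPos (-a) := by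
  rcases P.base a ha with ⟨c, rfl⟩ | ⟨c, rfl⟩
  · exact Or.inl fun i => by rw [P.coweight_sum_smul_sroot]; positivity
  · exact Or.inr fun i => by rw [neg_neg, P.coweight_sum_smul_sroot]; positivity

lemma not_isPos_neg {a : V} (ha : a ∈ P.isRoot) (hpos : P.IsPos a) : ¬ P.IsPos (-a) := by
  refine fun hneg => P.ne_zero a ha (P.eq_zero_of_forall_coweight_eq_zero fun i => ?_)
  have := hneg i
  rw [map_neg] at this
  linarith [hpos i]

lemma neg_mem_isRoot {a : V} (ha : a ∈ P.isRoot) : -a ∈ P.isRoot := by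
  have := P.reflect_mem a ha a ha
  rwa [P.coroot_self a ha, two_smul, sub_add_cancel_left] at this

end Positivity

section Integrality

lemma exists_int_eq_of_mem_rootLattice {f : V →ₗ[ℝ] ℝ} (hf : ∀ a ∈ P.isRoot, ∃ n : ℤ, f a = n)
    {q : V} (hq : q ∈ P.rootLattice) : ∃ n : ℤ, f q = n := by
  let L : AddSubgroup V := (Int.castAddHom ℝ).range.comap f.toAddMonoidHom
  have hL : P.rootLattice ≤ L := (AddSubgroup.closure_le L).mpr fun a ha => by
    obtain ⟨n, hn⟩ := hf a ha
    exact ⟨n, hn.symm⟩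
  obtain ⟨n, hn⟩ := hL hq
  exact ⟨n, hn.symm⟩

lemma exists_int_coweight_eq {q : V} (hq : q ∈ P.rootLattice) (i : ι) :
    ∃ n : ℤ, P.coweight i q = n := by
  refine P.exists_int_eq_of_mem_rootLattice (fun a ha => ?_) hq
  rcases P.base a ha with ⟨c, rfl⟩ | ⟨c, rfl⟩
  · exact ⟨c i, by simp [P.coweight_sum_smul_sroot]⟩
  · exact ⟨-c i, by simp [P.coweight_sum_smul_sroot]⟩

lemma coweight_add_one_le_of_lt {u v : V} (hu : u ∈ P.rootLattice) (hv : v ∈ P.rootLattice)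
    {i : ι} (h : P.coweight i u < P.coweight i v) : P.coweight i u + 1 ≤ P.coweight i v := by
  obtain ⟨m, hm⟩ := P.exists_int_coweight_eq hu i
  obtain ⟨n, hn⟩ := P.exists_int_coweight_eq hv i
  rw [hm, hn] at h ⊢
  exact_mod_cast Int.add_one_le_iff.mpr (by exact_mod_cast h)

lemma exists_int_coroot_eq {a : V} (ha : a ∈ P.isRoot) {q : V} (hq : q ∈ P.rootLattice) :
    ∃ n : ℤ, P.coroot a q = n :=
  P.exists_int_eq_of_mem_rootLattice (P.crystallographic a ha) hq

end Integrality

section SimpleReflections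

lemma sref_apply (i : ι) (v : V) : P.sref i v = v - P.coroot (P.sroot i) v • P.sroot i :=
  reflection_apply _ _

lemma coweight_sref (i j : ι) (v : V) :
    P.coweight j (P.sref i v) = P.coweight j v - if j = i then P.coroot (P.sroot i) v else 0 := by
  rw [P.sref_apply, map_sub, map_smul, P.coweight_sroot, smul_eq_mul]
  split_ifs <;> simp

lemma sref_mem_isRoot (i : ι) {a : V} (ha : a ∈ P.isRoot) : P.sref i a ∈ P.isRoot := by
  rw [P.sref_apply]
  exact P.reflect_mem _ (P.sroot_mem i) a ha

/-- A positive root other than `α_i` has a positive coordinate away from `i`, which `s_i` does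
not change. -/
lemma isPos_sref {a : V} (ha : a ∈ P.isRoot) (hpos : P.IsPos a) {i : ι} (hne : a ≠ P.sroot i) :
    P.IsPos (P.sref i a) ∧ P.sref i a ≠ P.sroot i := by
  obtain ⟨k, hki, hk⟩ : ∃ k, k ≠ i ∧ 0 < P.coweight k a := by
    by_contra! h
    have hcoord : a = P.coweight i a • P.sroot i := by
      conv_lhs => rw [← P.sum_coweight_smul_sroot a]
      refine Finset.sum_eq_single i (fun k _ hki => ?_) (by simp)
      rw [le_antisymm (h k hki) (hpos k), zero_smul]
    rcases P.reduced _ (P.sroot_mem i) _ (hcoord ▸ ha) with h1 | h1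
    · exact hne (by rw [hcoord, h1, one_smul])
    · linarith [hpos i]
  have hkeep : P.coweight k (P.sref i a) = P.coweight k a := by
    rw [P.coweight_sref, if_neg hki, sub_zero]
  refine ⟨?_, fun h => ?_⟩
  · refine (P.isPos_or_isPos_neg (P.sref_mem_isRoot i ha)).resolve_right fun hneg => ?_
    have := hneg k
    rw [map_neg, hkeep] at this
    linarith
  · have := hkeep
    rw [h, P.coweight_sroot, if_neg hki] at this
    linarith

lemma coroot_sroot_sroot_nonpos {j k : ι} (h : k ≠ j) :
    P.coroot (P.sroot j) (P.sroot k) ≤ 0 := by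
  have hne : P.sroot k ≠ P.sroot j := fun hkj => by
    simpa [P.coweight_sroot, h] using congrArg (P.coweight k) hkj
  have := (P.isPos_sref (P.sroot_mem k) (P.isPos_sroot k) hne).1 j
  simpa [P.coweight_sref, P.coweight_sroot, Ne.symm h] using this

lemma coroot_sroot_nonpos {u : V} (hu : P.IsPos u) {j : ι} (hj : P.coweight j u = 0) :
    P.coroot (P.sroot j) u ≤ 0 := by
  rw [P.apply_eq_sum_coweight_mul _ u]
  refine Finset.sum_nonpos fun k _ => ?_
  rcases eq_or_ne k j with rfl | hkj
  · simp [hj]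
  · exact mul_nonpos_of_nonneg_of_nonpos (hu k) (P.coroot_sroot_sroot_nonpos hkj)

end SimpleReflections

section WeylGroup

noncomputable def refl {a : V} (ha : a ∈ P.isRoot) : V ≃ₗ[ℝ] V :=
  reflection (P.coroot_self a ha)

lemma refl_apply {a : V} (ha : a ∈ P.isRoot) (v : V) : P.refl ha v = v - P.coroot a v • a :=
  reflection_apply _ _

lemma refl_mem_weylGroup {a : V} (ha : a ∈ P.isRoot) : P.refl ha ∈ P.weylGroup :=
  Subgroup.subset_closure ⟨a, ha, rfl⟩

lemma sref_mem_weylGroup (i : ι) : P.sref i ∈ P.weylGroup :=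
  P.refl_mem_weylGroup (P.sroot_mem i)

lemma weylGroup_le_stabilizer : P.weylGroup ≤ MulAction.stabilizer (V ≃ₗ[ℝ] V) P.isRoot := by
  refine (Subgroup.closure_le _).mpr ?_
  rintro _ ⟨a, ha, rfl⟩
  refine MulAction.mem_stabilizer_iff.mpr ?_
  rw [← Set.image_smul]
  exact (bijOn_reflection_of_mapsTo _ fun b hb => by
    rw [reflection_apply]; exact P.reflect_mem a ha b hb).image_eq

lemma apply_mem_isRoot {w : V ≃ₗ[ℝ] V} (hw : w ∈ P.weylGroup) {a : V} (ha : a ∈ P.isRoot) :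
    w a ∈ P.isRoot := by
  rw [← MulAction.mem_stabilizer_iff.mp (P.weylGroup_le_stabilizer hw)]
  exact Set.smul_mem_smul_set ha

lemma apply_mem_rootLattice {w : V ≃ₗ[ℝ] V} (hw : w ∈ P.weylGroup) {q : V}
    (hq : q ∈ P.rootLattice) : w q ∈ P.rootLattice :=
  (AddSubgroup.closure_le (P.rootLattice.comap w.toLinearMap.toAddMonoidHom)).mpr
    (fun _ ha => AddSubgroup.subset_closure (P.apply_mem_isRoot hw ha)) hq

instance : Finite P.weylGroup := by
  have : Finite P.isRoot := P.finite
  let restrict (w : P.weylGroup) : P.isRoot → P.isRoot :=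
    fun a => ⟨(w : V ≃ₗ[ℝ] V) a, P.apply_mem_isRoot w.2 a.2⟩
  refine Finite.of_injective restrict fun w₁ w₂ h => Subtype.ext ?_
  refine LinearEquiv.toLinearMap_injective (LinearMap.ext_on P.span_top fun a ha => ?_)
  exact congrArg Subtype.val (congrFun h ⟨a, ha⟩)

noncomputable instance : Fintype P.weylGroup := Fintype.ofFinite _

lemma orbit_finite (x : V) : (P.orbit x).Finite := by
  refine (Set.finite_range fun w : P.weylGroup => (w : V ≃ₗ[ℝ] V) x).subset ?_
  rintro _ ⟨w, hw, rfl⟩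
  exact ⟨⟨w, hw⟩, rfl⟩

end WeylGroup

section InvariantForm

noncomputable def invForm : LinearMap.BilinForm ℝ V :=
  ∑ w : P.weylGroup, ∑ i, (LinearMap.mul ℝ ℝ).compl₁₂
    (P.coweight i ∘ₗ (w : V ≃ₗ[ℝ] V).toLinearMap) (P.coweight i ∘ₗ (w : V ≃ₗ[ℝ] V).toLinearMap)

lemma invForm_apply (u v : V) :
    P.invForm u v = ∑ w : P.weylGroup, ∑ i,
      P.coweight i ((w : V ≃ₗ[ℝ] V) u) * P.coweight i ((w : V ≃ₗ[ℝ] V) v) := by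
  simp [invForm]

lemma invForm_comm (u v : V) : P.invForm u v = P.invForm v u := by
  simp only [invForm_apply, mul_comm]

lemma invForm_isSymm : LinearMap.IsSymm P.invForm :=
  LinearMap.isSymm_def.mpr fun u v => P.invForm_comm u v

lemma invForm_self_pos {v : V} (hv : v ≠ 0) : 0 < P.invForm v v := by
  obtain ⟨i, hi⟩ : ∃ i, P.coweight i v ≠ 0 := by
    by_contra! h
    exact hv (P.eq_zero_of_forall_coweight_eq_zero h)
  rw [invForm_apply]
  refine Finset.sum_pos' (fun w _ => Finset.sum_nonneg fun i _ => mul_self_nonneg _)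
    ⟨1, Finset.mem_univ _, ?_⟩
  exact Finset.sum_pos' (fun i _ => mul_self_nonneg _) ⟨i, Finset.mem_univ _, mul_self_pos.mpr hi⟩

lemma invForm_apply_weylGroup {w : V ≃ₗ[ℝ] V} (hw : w ∈ P.weylGroup) (u v : V) :
    P.invForm (w u) (w v) = P.invForm u v := by
  simp only [invForm_apply]
  exact Fintype.sum_equiv (Equiv.mulRight ⟨w, hw⟩) _ _ fun _ => by
    simp only [Equiv.coe_mulRight, Subgroup.coe_mul, LinearEquiv.mul_apply]

lemma coroot_apply_eq {a : V} (ha : a ∈ P.isRoot) (v : V) :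
    P.coroot a v = 2 * P.invForm a v / P.invForm a a := by
  have hpos := P.invForm_self_pos (P.ne_zero a ha)
  have h := P.invForm_apply_weylGroup (P.refl_mem_weylGroup ha) a v
  simp only [refl_apply, P.coroot_self a ha, map_sub, map_smul, LinearMap.sub_apply,
    LinearMap.smul_apply, smul_eq_mul] at h
  field_simp
  linarith

lemma coroot_apply_weylGroup {w : V ≃ₗ[ℝ] V} (hw : w ∈ P.weylGroup) {a : V} (ha : a ∈ P.isRoot)
    (v : V) : P.coroot (w a) (w v) = P.coroot a v := by
  rw [P.coroot_apply_eq (P.apply_mem_isRoot hw ha), P.coroot_apply_eq ha,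
    P.invForm_apply_weylGroup hw, P.invForm_apply_weylGroup hw]

lemma refl_eq_mul_refl_mul_inv {w : V ≃ₗ[ℝ] V} (hw : w ∈ P.weylGroup) {a b : V}
    (ha : a ∈ P.isRoot) (hb : b ∈ P.isRoot) (hab : w a = b) :
    P.refl hb = w * P.refl ha * w⁻¹ := by
  subst hab
  ext v
  have hv : w (w⁻¹ v) = v := w.apply_symm_apply v
  have := P.coroot_apply_weylGroup hw ha (w⁻¹ v)
  rw [hv] at this
  simp only [LinearEquiv.mul_apply, refl_apply, map_sub, map_smul, hv, this]

lemma coroot_neg {a : V} (ha : a ∈ P.isRoot) (v : V) : P.coroot (-a) v = -P.coroot a v := by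
  rw [P.coroot_apply_eq (P.neg_mem_isRoot ha), P.coroot_apply_eq ha]
  simp only [map_neg, LinearMap.neg_apply, neg_neg]
  ring

lemma refl_neg {a : V} (ha : a ∈ P.isRoot) : P.refl (P.neg_mem_isRoot ha) = P.refl ha := by
  ext v
  simp [refl_apply, P.coroot_neg ha]

lemma invForm_apply_eq {a : V} (ha : a ∈ P.isRoot) (v : V) :
    P.invForm a v = P.coroot a v * P.invForm a a / 2 := by
  have := P.invForm_self_pos (P.ne_zero a ha)
  rw [P.coroot_apply_eq ha]
  field_simp

lemma coroot_nonneg_of_isDominant {y : V} (hy : P.IsDominant y) {a : V} (ha : a ∈ P.isRoot)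
    (hpos : P.IsPos a) : 0 ≤ P.coroot a y := by
  have hBy : 0 ≤ P.invForm a y := by
    rw [← LinearMap.flip_apply, P.apply_eq_sum_coweight_mul]
    refine Finset.sum_nonneg fun i _ => mul_nonneg (hpos i) ?_
    rw [LinearMap.flip_apply, P.invForm_apply_eq (P.sroot_mem i)]
    have := P.invForm_self_pos (P.ne_zero _ (P.sroot_mem i))
    have := hy i
    positivity
  rw [P.coroot_apply_eq ha]
  have := P.invForm_self_pos (P.ne_zero a ha)
  positivity

lemma exists_coroot_sroot_pos {a : V} (ha : a ≠ 0) (hpos : P.IsPos a) :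
    ∃ i, 0 < P.coroot (P.sroot i) a := by
  by_contra! h
  have : P.invForm a a ≤ 0 := by
    rw [P.apply_eq_sum_coweight_mul (P.invForm a)]
    refine Finset.sum_nonpos fun i _ => mul_nonpos_of_nonneg_of_nonpos (hpos i) ?_
    rw [P.invForm_comm, P.invForm_apply_eq (P.sroot_mem i)]
    have := P.invForm_self_pos (P.ne_zero _ (P.sroot_mem i))
    have := h i
    nlinarith
  linarith [P.invForm_self_pos ha]

/-- By Cauchy–Schwarz `⟨a, b^∨⟩ ⟨b, a^∨⟩ < 4` unless `a = ±b`, and the two factors are integers of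
the same sign. -/
lemma neg_three_le_coroot {a b : V} (ha : a ∈ P.isRoot) (hb : b ∈ P.isRoot) (hne : a ≠ -b) :
    -3 ≤ P.coroot b a := by
  by_cases hind : LinearIndependent ℝ ![b, a]
  swap
  · obtain ⟨t, rfl⟩ : ∃ t : ℝ, t • b = a := by
      simpa [LinearIndependent.pair_iff' (P.ne_zero b hb)] using hind
    rcases P.reduced b hb t ha with rfl | rfl
    · norm_num [P.coroot_self b hb]
    · exact absurd (neg_one_smul ℝ b) hne
  have hCS := (P.invForm.apply_sq_lt_iff_linearIndependent_of_symm
    (fun _ => P.invForm_self_pos) P.invForm_isSymm b a).mpr hind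
  have hBa := P.invForm_self_pos (P.ne_zero a ha)
  have hBb := P.invForm_self_pos (P.ne_zero b hb)
  obtain ⟨p, hp⟩ := P.crystallographic b hb a ha
  obtain ⟨q, hq⟩ := P.crystallographic a ha b hb
  rw [P.coroot_apply_eq hb] at hp
  rw [P.coroot_apply_eq ha, P.invForm_comm a b] at hq
  have hpq : p * q < 4 := by
    have : (p * q : ℝ) < 4 := by
      rw [← hp, ← hq, div_mul_div_comm, div_lt_iff₀ (by positivity)]
      nlinarith
    exact_mod_cast this
  have hsign (h : p < 0) : q < 0 := by
    have hBab : P.invForm b a < 0 := by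
      by_contra! h'
      have : (0 : ℝ) ≤ p := hp ▸ div_nonneg (mul_nonneg zero_le_two h') hBb.le
      exact absurd (Int.cast_nonneg_iff.mp this) (not_le.mpr h)
    have : (q : ℝ) < 0 := hq ▸ div_neg_of_neg_of_pos (by linarith) hBa
    exact_mod_cast this
  rw [P.coroot_apply_eq hb, hp]
  have : -3 ≤ p := by
    rcases le_or_gt 0 p with h | h
    · omega
    · nlinarith [hsign h]
  exact_mod_cast this

end InvariantForm

section Words

noncomputable def wordProd (l : List ι) : V ≃ₗ[ℝ] V := (l.map P.sref).prod

@[simp] lemma wordProd_nil : P.wordProd [] = 1 := rfl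

lemma wordProd_cons (j : ι) (l : List ι) : P.wordProd (j :: l) = P.sref j * P.wordProd l := by
  simp [wordProd]

lemma wordProd_append (l₁ l₂ : List ι) :
    P.wordProd (l₁ ++ l₂) = P.wordProd l₁ * P.wordProd l₂ := by
  simp [wordProd]

lemma wordProd_singleton (j : ι) : P.wordProd [j] = P.sref j := by
  simp [wordProd]

lemma sref_inv (i : ι) : (P.sref i)⁻¹ = P.sref i := rfl

lemma sref_mul_self (i : ι) : P.sref i * P.sref i = 1 :=
  inv_mul_cancel (P.sref i)

lemma wordProd_reverse (l : List ι) : P.wordProd l.reverse = (P.wordProd l)⁻¹ := by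
  induction l with
  | nil => simp
  | cons j l ih =>
    rw [List.reverse_cons, wordProd_append, ih, wordProd_singleton, wordProd_cons, mul_inv_rev,
      sref_inv]

lemma wordProd_mem_weylGroup (l : List ι) : P.wordProd l ∈ P.weylGroup := by
  induction l with
  | nil => exact P.weylGroup.one_mem
  | cons j l ih => rw [wordProd_cons]; exact P.weylGroup.mul_mem (P.sref_mem_weylGroup j) ih

def height : V →ₗ[ℝ] ℝ := ∑ i, P.coweight i

lemma height_sref (i : ι) (v : V) :
    P.height (P.sref i v) = P.height v - P.coroot (P.sroot i) v := by
  simp [height, sref_apply, P.coweight_sroot]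

lemma exists_wordProd_eq_refl_of_isPos (n : ℕ) {a : V} (ha : a ∈ P.isRoot) (hpos : P.IsPos a)
    (hn : P.height a < n) : ∃ l, P.wordProd l = P.refl ha := by
  induction n generalizing a with
  | zero =>
    exact absurd hn (not_lt.mpr (by simpa [height] using Finset.sum_nonneg fun i _ => hpos i))
  | succ n ih =>
    obtain ⟨i, hi⟩ := P.exists_coroot_sroot_pos (P.ne_zero a ha) hpos
    by_cases hai : a = P.sroot i
    · subst hai
      exact ⟨[i], P.wordProd_singleton i⟩
    have hb := P.sref_mem_isRoot i ha
    obtain ⟨m, hm⟩ := P.crystallographic _ (P.sroot_mem i) a ha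
    have hm1 : (1 : ℝ) ≤ m := by
      rw [hm] at hi
      exact_mod_cast (Int.cast_pos.mp hi : 0 < m)
    obtain ⟨l, hl⟩ := ih hb (P.isPos_sref ha hpos hai).1 (by
      rw [height_sref, hm]
      push_cast at hn
      linarith)
    refine ⟨[i] ++ l ++ [i], ?_⟩
    rw [P.refl_eq_mul_refl_mul_inv (P.sref_mem_weylGroup i) hb ha
      (involutive_reflection _ a), wordProd_append, wordProd_append, hl, wordProd_singleton,
      sref_inv]

lemma exists_wordProd_eq {w : V ≃ₗ[ℝ] V} (hw : w ∈ P.weylGroup) : ∃ l, P.wordProd l = w := by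
  induction hw using Subgroup.closure_induction with
  | mem w hw =>
    obtain ⟨a, ha, rfl⟩ := hw
    change ∃ l, P.wordProd l = P.refl ha
    obtain ⟨n, hn⟩ := exists_nat_gt (max (P.height a) (P.height (-a)))
    rcases P.isPos_or_isPos_neg ha with hpos | hneg
    · exact P.exists_wordProd_eq_refl_of_isPos n ha hpos (lt_of_le_of_lt (le_max_left _ _) hn)
    · rw [← P.refl_neg ha]
      exact P.exists_wordProd_eq_refl_of_isPos n _ hneg (lt_of_le_of_lt (le_max_right _ _) hn)
  | one => exact ⟨[], rfl⟩
  | mul w₁ w₂ _ _ ih₁ ih₂ =>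
    obtain ⟨l₁, rfl⟩ := ih₁
    obtain ⟨l₂, rfl⟩ := ih₂
    exact ⟨l₁ ++ l₂, P.wordProd_append l₁ l₂⟩
  | inv w _ ih =>
    obtain ⟨l, rfl⟩ := ih
    exact ⟨l.reverse, P.wordProd_reverse l⟩

lemma exists_shorter_of_not_isPos (l : List ι) (i : ι)
    (h : ¬ P.IsPos (P.wordProd l (P.sroot i))) :
    ∃ l', P.wordProd (l ++ [i]) = P.wordProd l' ∧ l'.length < l.length := by
  induction l with
  | nil => exact absurd (P.isPos_sroot i) (by simpa using h)
  | cons j l ih =>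
    have hβ := P.apply_mem_isRoot (P.wordProd_mem_weylGroup l) (P.sroot_mem i)
    by_cases hpos : P.IsPos (P.wordProd l (P.sroot i))
    · have hβj : P.wordProd l (P.sroot i) = P.sroot j := by
        by_contra hne
        exact h (by rw [wordProd_cons]; exact (P.isPos_sref hβ hpos hne).1)
      have hsj := P.refl_eq_mul_refl_mul_inv (P.wordProd_mem_weylGroup l) (P.sroot_mem i)
        (P.sroot_mem j) hβj
      refine ⟨l, ?_, by simp⟩
      rw [List.cons_append, wordProd_cons, wordProd_append, wordProd_singleton]
      change P.sref j = P.wordProd l * P.sref i * (P.wordProd l)⁻¹ at hsj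
      rw [hsj, show ∀ a b : V ≃ₗ[ℝ] V, a * b * a⁻¹ * (a * b) = a * (b * b) from fun a b => by group,
        sref_mul_self, mul_one]
    · obtain ⟨l', hl', hlen⟩ := ih hpos
      exact ⟨j :: l', by rw [List.cons_append, wordProd_cons, hl', wordProd_cons],
        by simpa using hlen⟩

end Words

section Climbing

variable {x : V}

/-- If `⟨v, α_j^∨⟩ = -1` then `s_j v = v + α_j`, and the `j`-th coordinate of `v` is strictly
below that of `x`, since otherwise `⟨x - v, α_j^∨⟩ ≤ 0` would contradict dominance of `x`. -/
lemma coweight_sref_le (hx : x ∈ P.rootLattice) (hxdom : P.IsDominant x) {v : V}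
    (hv : v ∈ P.rootLattice) (hvx : ∀ i, P.coweight i v ≤ P.coweight i x) {j : ι}
    (hj : -1 ≤ P.coroot (P.sroot j) v) (i : ι) :
    P.coweight i (P.sref j v) ≤ P.coweight i x := by
  rw [coweight_sref]
  split_ifs with hij
  swap
  · simpa using hvx i
  subst hij
  obtain ⟨t, ht⟩ := P.exists_int_coroot_eq (P.sroot_mem i) hv
  rcases le_or_gt 0 t with ht0 | ht0
  · have : (0 : ℝ) ≤ t := by exact_mod_cast ht0
    linarith [hvx i]
  have ht1 : t = -1 := by
    have : -1 ≤ t := by exact_mod_cast ht ▸ hj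
    omega
  have hlt : P.coweight i v < P.coweight i x := by
    refine lt_of_le_of_ne (hvx i) fun heq => ?_
    have := P.coroot_sroot_nonpos (u := x - v) (j := i) (fun k => by simpa using hvx k)
      (by rw [map_sub, heq, sub_self])
    rw [map_sub, ht, ht1, Int.cast_neg, Int.cast_one] at this
    linarith [hxdom i]
  rw [ht, ht1]
  push_cast
  linarith [P.coweight_add_one_le_of_lt hv hx hlt]

def IsAlmostDominant (z : V) : Prop := ∀ γ ∈ P.isRoot, P.IsPos γ → -1 ≤ P.coroot γ z

lemma coweight_wordProd_inv_apply_le (hx : x ∈ P.rootLattice) (hxdom : P.IsDominant x) {z : V}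
    (hzQ : z ∈ P.rootLattice) (hzx : ∀ i, P.coweight i z ≤ P.coweight i x)
    (hz : P.IsAlmostDominant z) (n : ℕ) (l : List ι) (hl : l.length ≤ n) (i : ι) :
    P.coweight i ((P.wordProd l)⁻¹ z) ≤ P.coweight i x := by
  induction n generalizing l i with
  | zero =>
    obtain rfl : l = [] := List.length_eq_zero_iff.mp (Nat.le_zero.mp hl)
    simpa using hzx i
  | succ n ih =>
    rcases l.eq_nil_or_concat' with rfl | ⟨l, j, rfl⟩
    · simpa using hzx i
    simp only [List.length_append, List.length_singleton, add_le_add_iff_right] at hl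
    by_cases hpos : P.IsPos (P.wordProd l (P.sroot j))
    · have hw := P.wordProd_mem_weylGroup l
      rw [wordProd_append, wordProd_singleton, mul_inv_rev, sref_inv, LinearEquiv.mul_apply]
      refine P.coweight_sref_le hx hxdom (P.apply_mem_rootLattice (inv_mem hw) hzQ)
        (ih l hl) ?_ i
      have := P.coroot_apply_weylGroup hw (P.sroot_mem j) ((P.wordProd l)⁻¹ z)
      rw [show P.wordProd l ((P.wordProd l)⁻¹ z) = z from (P.wordProd l).apply_symm_apply z] at this
      exact this ▸ hz _ (P.apply_mem_isRoot hw (P.sroot_mem j)) hpos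
    · obtain ⟨l', hl', hlen⟩ := P.exists_shorter_of_not_isPos l j hpos
      rw [hl']
      exact ih l' (by omega) i

theorem coweight_apply_le_of_isAlmostDominant (hx : x ∈ P.rootLattice) (hxdom : P.IsDominant x)
    {z : V} (hzQ : z ∈ P.rootLattice) (hzx : ∀ i, P.coweight i z ≤ P.coweight i x)
    (hz : P.IsAlmostDominant z) {w : V ≃ₗ[ℝ] V} (hw : w ∈ P.weylGroup) (i : ι) :
    P.coweight i (w z) ≤ P.coweight i x := by
  obtain ⟨l, hl⟩ := P.exists_wordProd_eq (inv_mem hw)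
  rw [← inv_inv w, ← hl]
  exact P.coweight_wordProd_inv_apply_le hx hxdom hzQ hzx hz _ l le_rfl i

end Climbing

section HalfRoot

variable {y : V} {i₀ : ι}

lemma coweight_add_half_sroot_le {x : V} (hx : x ∈ P.rootLattice)
    (hzQ : y + (1 / 2 : ℝ) • P.sroot i₀ ∈ P.rootLattice)
    (hyx : ∀ i, P.coweight i y ≤ P.coweight i x) (i : ι) :
    P.coweight i (y + (1 / 2 : ℝ) • P.sroot i₀) ≤ P.coweight i x := by
  by_contra! h
  have := P.coweight_add_one_le_of_lt hx hzQ h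
  rw [map_add, map_smul, P.coweight_sroot, smul_eq_mul] at this
  split_ifs at this <;> linarith [hyx i]

lemma isAlmostDominant_add_half_sroot (hy : P.IsDominant y)
    (hzQ : y + (1 / 2 : ℝ) • P.sroot i₀ ∈ P.rootLattice) :
    P.IsAlmostDominant (y + (1 / 2 : ℝ) • P.sroot i₀) := by
  intro γ hγ hpos
  have hne : P.sroot i₀ ≠ -γ := fun h =>
    P.not_isPos_neg (P.sroot_mem i₀) (P.isPos_sroot i₀) (by rwa [h, neg_neg])
  have h3 := P.neg_three_le_coroot (P.sroot_mem i₀) hγ hne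
  have hy0 := P.coroot_nonneg_of_isDominant hy hγ hpos
  obtain ⟨t, ht⟩ := P.exists_int_coroot_eq hγ hzQ
  have : (-2 : ℝ) < t := by
    rw [← ht, map_add, map_smul, smul_eq_mul]
    linarith
  have : (-2 : ℤ) < t := by exact_mod_cast this
  rw [ht]
  exact_mod_cast (show (-1 : ℤ) ≤ t by omega)

end HalfRoot

section Rho

open Classical in
noncomputable def posRoots : Finset V := P.finite.toFinset.filter P.IsPos

lemma mem_posRoots {a : V} : a ∈ P.posRoots ↔ a ∈ P.isRoot ∧ P.IsPos a := by
  simp [posRoots]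

noncomputable def rho : V := ∑ a ∈ P.posRoots, a

lemma sref_rho (i : ι) : P.sref i P.rho = P.rho - (2 : ℝ) • P.sroot i := by
  classical
  have hi : P.sroot i ∈ P.posRoots := P.mem_posRoots.mpr ⟨P.sroot_mem i, P.isPos_sroot i⟩
  have hmaps :
      Set.MapsTo (P.sref i) (P.posRoots.erase (P.sroot i)) (P.posRoots.erase (P.sroot i)) := by
    intro a ha
    obtain ⟨hne, ha⟩ := Finset.mem_erase.mp ha
    obtain ⟨haR, hpos⟩ := P.mem_posRoots.mp ha
    obtain ⟨hpos', hne'⟩ := P.isPos_sref haR hpos hne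
    exact Finset.mem_erase.mpr ⟨hne', P.mem_posRoots.mpr ⟨P.sref_mem_isRoot i haR, hpos'⟩⟩
  have hinv := involutive_reflection (P.coroot_self _ (P.sroot_mem i))
  have hfix : ∑ a ∈ P.posRoots.erase (P.sroot i), P.sref i a =
      ∑ a ∈ P.posRoots.erase (P.sroot i), a :=
    Finset.sum_nbij' _ _ hmaps hmaps (fun a _ => hinv a) (fun a _ => hinv a) fun _ _ => rfl
  rw [rho, ← Finset.add_sum_erase _ _ hi, map_add, map_sum, hfix, P.sref_apply,
    P.coroot_self _ (P.sroot_mem i)]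
  module

/-- Maximising `F` over the Weyl orbit of the regular element `ρ`. -/
lemma exists_mem_weylGroup_forall_nonneg (F : V →ₗ[ℝ] ℝ) :
    ∃ w ∈ P.weylGroup, ∀ i, 0 ≤ F (w (P.sroot i)) := by
  obtain ⟨w, hw⟩ := Finite.exists_max fun w : P.weylGroup => F ((w : V ≃ₗ[ℝ] V) P.rho)
  refine ⟨w, w.2, fun i => ?_⟩
  have := hw (w * ⟨P.sref i, P.sref_mem_weylGroup i⟩)
  simp only [Subgroup.coe_mul, LinearEquiv.mul_apply, P.sref_rho, map_sub, map_smul,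
    smul_eq_mul] at this
  linarith

end Rho

theorem mem_convexHull_orbit {x z : V}
    (h : ∀ w ∈ P.weylGroup, ∀ i, P.coweight i (w z) ≤ P.coweight i x) :
    z ∈ convexHull ℝ (P.orbit x) := by
  have := P.finiteDimensional
  by_contra hz
  obtain ⟨F, hF⟩ := exists_linearMap_lt_of_notMem_convexHull (P.orbit_finite x) hz
  obtain ⟨w, hw, hdom⟩ := P.exists_mem_weylGroup_forall_nonneg F
  have hzx : F z ≤ F (w x) := calc
    F z = (F ∘ₗ w.toLinearMap) (w⁻¹ z) := by simp
    _ = ∑ i, P.coweight i (w⁻¹ z) * F (w (P.sroot i)) := P.apply_eq_sum_coweight_mul _ _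
    _ ≤ ∑ i, P.coweight i x * F (w (P.sroot i)) := Finset.sum_le_sum fun i _ =>
      mul_le_mul_of_nonneg_right (h _ (inv_mem hw) i) (hdom i)
    _ = F (w x) := (P.apply_eq_sum_coweight_mul (F ∘ₗ w.toLinearMap) x).symm
  exact (hF _ ⟨w, hw, rfl⟩).not_ge hzx

end RootSystemData

theorem statement1_general {ι V : Type*} [Fintype ι] [DecidableEq ι] [AddCommGroup V] [Module ℝ V]
    (P : RootSystemData ι V) (x y z : V) (i₀ : ι)
    (hx : x ∈ P.rootLattice) (hxdom : P.IsDominant x)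
    (hz : z = y + (1 / 2 : ℝ) • P.sroot i₀) (hzQ : z ∈ P.rootLattice)
    (h2 : P.IsDominant y)
    (h3 : ∀ i, P.coweight i y ≤ P.coweight i x) :
    z ∈ convexHull ℝ (P.orbit x) := by
  subst hz
  exact P.mem_convexHull_orbit fun w hw =>
    P.coweight_apply_le_of_isAlmostDominant hx hxdom hzQ (P.coweight_add_half_sroot_le hx hzQ h3)
      (P.isAlmostDominant_add_half_sroot h2 hzQ) hw

/-- Let `x ∈ Q(R)` be dominant, fix a simple root `α_{i₀}`, and suppose
`z = y + (1/2)α_{i₀}` lies in `Q(R)`, where (i) `⟨y, α_{i₀}^∨⟩ = 0`, (ii) `y` is dominant,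
and (iii) `⟨y, ϖ_i⟩ ≤ ⟨x, ϖ_i⟩` for all `i ∈ I`. Then `z ∈ Conv(O_x)`. -/
theorem statement1 {ι V : Type*} [Fintype ι] [DecidableEq ι] [AddCommGroup V] [Module ℝ V]
    (P : RootSystemData ι V) (x y z : V) (i₀ : ι)
    (hx : x ∈ P.rootLattice) (hxdom : P.IsDominant x)
    (hz : z = y + (1 / 2 : ℝ) • P.sroot i₀) (hzQ : z ∈ P.rootLattice)
    (h1 : P.coroot (P.sroot i₀) y = 0)
    (h2 : P.IsDominant y)
    (h3 : ∀ i, P.coweight i y ≤ P.coweight i x) :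
    z ∈ convexHull ℝ (P.orbit x) :=
  statement1_general P x y z i₀ hx hxdom hz hzQ h2 h3
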